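/- (Pólya-Knopp type inequality for Sugeno integral, second case, bounded part.) For any nonnegative measurable function f : [0, ∞) → [0, ∞), the Sugeno integral over [0, ∞) (with respect to Lebesgue measure) of the function x ↦ exp((1/x) · S(x)), where S(x) is the Sugeno integral of t ↦ ln f(t) over [0, x] (taking only the nonnegative part of ln f), is at most e. -/

import Mathlib

open MeasureTheory Set ENNReal Real

/-- Sugeno integral of `g` over `A` w.r.t. a measure `μ` on `ℝ`. -/
noncomputable def sugeno (μ : Measure ℝ) (A : Set ℝ) (g : ℝ → ℝ) : ℝ≥0∞ :=
  ⨆ α : NNReal, ((α : ℝ≥0∞) ⊓ μ (A ∩ {x | (α : ℝ) ≤ g x}))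

lemma sugeno_le_measure (μ : Measure ℝ) (A : Set ℝ) (g : ℝ → ℝ) :
    sugeno μ A g ≤ μ A :=
  iSup_le fun _ => inf_le_right.trans (measure_mono inter_subset_left)

lemma sugeno_le_ofReal_of_le (μ : Measure ℝ) {A : Set ℝ} {g : ℝ → ℝ} {c : ℝ}
    (hg : ∀ x ∈ A, g x ≤ c) : sugeno μ A g ≤ ENNReal.ofReal c := by
  refine iSup_le fun α => ?_
  by_cases hα : (α : ℝ) ≤ c
  · rw [← ENNReal.ofReal_coe_nnreal]
    exact inf_le_left.trans (ENNReal.ofReal_le_ofReal hα)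
  · have hempty : A ∩ {x | (α : ℝ) ≤ g x} = ∅ :=
      eq_empty_of_forall_notMem fun x ⟨hxA, hαx⟩ => hα (hαx.trans (hg x hxA))
    simp [hempty]

lemma toReal_sugeno_Icc_zero_le (g : ℝ → ℝ) {x : ℝ} (hx : 0 ≤ x) :
    (sugeno volume (Icc 0 x) g).toReal ≤ x := by
  refine ENNReal.toReal_le_of_le_ofReal hx ?_
  simpa [Real.volume_Icc] using sugeno_le_measure volume (Icc 0 x) g

lemma one_div_mul_toReal_sugeno_Icc_zero_le_one (g : ℝ → ℝ) (x : ℝ) :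
    1 / x * (sugeno volume (Icc 0 x) g).toReal ≤ 1 := by
  rcases lt_or_ge 0 x with hx | hx
  · calc 1 / x * (sugeno volume (Icc 0 x) g).toReal ≤ 1 / x * x := by
          gcongr; exact toReal_sugeno_Icc_zero_le g hx.le
      _ = 1 := one_div_mul_cancel hx.ne'
  · exact (mul_nonpos_of_nonpos_of_nonneg (one_div_nonpos.mpr hx) toReal_nonneg).trans
      zero_le_one

theorem polya_knopp_second_case_bound_general (f : ℝ → ℝ) :
    sugeno volume (Ici 0)
        (fun x => Real.exp ((1 / x) *
          (sugeno volume (Icc 0 x) (fun t => Real.log (f t))).toReal)) ≤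
      ENNReal.ofReal (Real.exp 1) :=
  sugeno_le_ofReal_of_le volume fun x _ =>
    Real.exp_le_exp.mpr (one_div_mul_toReal_sugeno_Icc_zero_le_one _ x)

theorem polya_knopp_second_case_bound (f : ℝ → ℝ) (hf : Measurable f) (hf0 : ∀ x, 0 ≤ f x) :
    sugeno volume (Ici 0)
        (fun x => Real.exp ((1 / x) *
          (sugeno volume (Icc 0 x) (fun t => Real.log (f t))).toReal)) ≤
      ENNReal.ofReal (Real.exp 1) :=
  polya_knopp_second_case_bound_general f
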